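/- Let (L_t)_{t∈[0,T]} be a non-homogeneous Lévy process satisfying (NL1) and (NL2), and let H^{(i)} be its orthonormalized power-jump processes. Then for all i, j ≥ 1 the predictable angle bracket satisfies ⟨H^{(i)}, H^{(j)}⟩_t = ∫_0^t ∫_{−∞}^{+∞} q_i(e) q_j(e) π(ds,de); in particular ⟨H^{(i)}, H^{(j)}⟩ ≡ 0 whenever i ≠ j, i.e., the martingales H^{(i)} are pairwise strongly orthogonal. -/

import Mathlib

/- STATEMENT 3: the orthonormalized power-jump processes H^{(i)} are pairwise
strongly orthogonal: ⟨H^{(i)}, H^{(j)}⟩_t = ∫₀ᵗ∫ q_i(e) q_j(e) π(ds,de), which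
vanishes identically for i ≠ j.

Here the (deterministic) predictable brackets of the Teugels martingales are
⟨X^{(i)},X^{(j)}⟩_t = ∫₀ᵗ c_s ds · 1_{i=j=1} + m^{(i+j)}_t, with
m^{(1)}_t = E[L_t] and m^{(i)}_t = ∫₀ᵗ∫ eⁱ F_s(de) ds for i ≥ 2;
H^{(i)} = Σ_{k=1}^i α_{i,k} X^{(k)} so that, by bilinearity,
⟨H^{(i)},H^{(j)}⟩_t = Σ_{k=1}^i Σ_{k'=1}^j α_{i,k} α_{j,k'} ⟨X^{(k)},X^{(k')}⟩_t;
q_n(e) = Σ_{k=1}^n α_{n,k} e^{k-1} and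
π([0,t],de) = ∫₀ᵗ c_s δ₀(de) ds + ∫₀ᵗ e² F_s(de) ds, so that
∫₀ᵗ∫ q_i q_j dπ = (∫₀ᵗ c_s ds)·q_i(0)q_j(0) + ∫₀ᵗ∫ q_i(e)q_j(e) e² F_s(de) ds. -/

open MeasureTheory ProbabilityTheory

noncomputable section

structure NHLevy (Ω : Type*) [MeasurableSpace Ω] (P : Measure Ω) (T : ℝ) where
  L : ℝ → Ω → ℝ
  b : ℝ → ℝ
  c : ℝ → ℝ
  F : ℝ → Measure ℝ
  meas_L : ∀ t, Measurable (L t)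
  meas_b : Measurable b
  meas_c : Measurable c
  c_pos : ∀ s, 0 < c s
  F_zero : ∀ s, F s {0} = 0
  F_int : ∀ s, (∫⁻ e, ENNReal.ofReal (min 1 (e ^ 2)) ∂(F s)) < ⊤
  F_meas : ∀ A : Set ℝ, MeasurableSet A → Measurable fun s => F s A
  indep_increments : ∀ s t : ℝ, 0 ≤ s → s ≤ t → t ≤ T →
    Indep (⨆ r : Set.Icc (0 : ℝ) s, MeasurableSpace.comap (L r) (borel ℝ))
      (MeasurableSpace.comap (fun ω => L t ω - L s ω) (borel ℝ)) P
  charFn : ∀ t ∈ Set.Icc (0 : ℝ) T, ∀ u : ℝ,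
    (∫ ω, Complex.exp (Complex.I * (u : ℂ) * (L t ω : ℂ)) ∂P)
      = Complex.exp (∫ s in Set.Ioc (0 : ℝ) t,
          (Complex.I * (u : ℂ) * (b s : ℂ) - (c s : ℂ) / 2 * (u : ℂ) ^ 2
            + ∫ e, (Complex.exp (Complex.I * (u : ℂ) * (e : ℂ)) - 1
                - Complex.I * (u : ℂ) * (e : ℂ) * (if |e| ≤ 1 then 1 else 0)) ∂(F s)))

def NL1 {Ω : Type*} [MeasurableSpace Ω] {P : Measure Ω} {T : ℝ}
    (X : NHLevy Ω P T) : Prop :=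
  (∫⁻ s in Set.Ioc (0 : ℝ) T,
    (ENNReal.ofReal |X.b s| + ENNReal.ofReal (X.c s)
      + ∫⁻ e, ENNReal.ofReal (min 1 (e ^ 2)) ∂(X.F s))) < ⊤

def NL2 {Ω : Type*} [MeasurableSpace Ω] {P : Measure Ω} {T : ℝ}
    (X : NHLevy Ω P T) (ε 𝔠 : ℝ) : Prop :=
  ∀ u ∈ Set.Icc (-(1 + ε) * 𝔠) ((1 + ε) * 𝔠),
    (∫⁻ s in Set.Ioc (0 : ℝ) T,
      ∫⁻ e in {e : ℝ | 1 < |e|}, ENNReal.ofReal (Real.exp (u * e)) ∂(X.F s)) < ⊤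

variable {Ω : Type*} [MeasurableSpace Ω] {P : Measure Ω} {T : ℝ}

/-- `m^{(i)}_t`: the mean of the `i`-th power-jump process. -/
def powerJumpMean (X : NHLevy Ω P T) (P' : Measure Ω) (i : ℕ) (t : ℝ) : ℝ :=
  if i = 1 then ∫ ω, X.L t ω ∂P'
  else ∫ s in Set.Ioc (0 : ℝ) t, ∫ e, e ^ i ∂(X.F s)

/-- `⟨X^{(i)}, X^{(j)}⟩_t = ∫₀ᵗ c_s ds · 1_{i=j=1} + m^{(i+j)}_t`
(the deterministic predictable bracket of the Teugels martingales). -/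
def teugelsBracket (X : NHLevy Ω P T) (P' : Measure Ω) (i j : ℕ) (t : ℝ) : ℝ :=
  (if i = 1 ∧ j = 1 then ∫ s in Set.Ioc (0 : ℝ) t, X.c s else 0)
    + powerJumpMean X P' (i + j) t

/-- `⟨H^{(i)}, H^{(j)}⟩_t`, computed by bilinearity from
`H^{(i)} = Σ_{k=1}^i α_{i,k} X^{(k)}`. -/
def orthoBracket (X : NHLevy Ω P T) (P' : Measure Ω) (α : ℕ → ℕ → ℝ)
    (i j : ℕ) (t : ℝ) : ℝ :=
  ∑ k ∈ Finset.Icc 1 i, ∑ k' ∈ Finset.Icc 1 j,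
    α i k * α j k' * teugelsBracket X P' k k' t

/-- The orthonormal polynomials `q_n(e) = Σ_{k=1}^n α_{n,k} e^{k-1}`. -/
def qPoly (α : ℕ → ℕ → ℝ) (n : ℕ) (e : ℝ) : ℝ :=
  ∑ k ∈ Finset.Icc 1 n, α n k * e ^ (k - 1)

/-- `∫₀ᵗ ∫ q_i(e) q_j(e) π(ds,de)` where
`π([0,t],de) = ∫₀ᵗ c_s δ₀(de) ds + ∫₀ᵗ e² F_s(de) ds`. -/
def piIntegral (X : NHLevy Ω P T) (α : ℕ → ℕ → ℝ) (i j : ℕ) (t : ℝ) : ℝ :=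
  (∫ s in Set.Ioc (0 : ℝ) t, X.c s) * qPoly α i 0 * qPoly α j 0
    + ∫ s in Set.Ioc (0 : ℝ) t, ∫ e, qPoly α i e * qPoly α j e * e ^ 2 ∂(X.F s)

/-! Both sides of the identity are bilinear in the coefficients `α`: expanding
`q_i(e) q_j(e) e² = Σ α_{i,k} α_{j,k'} e^{k+k'}`, the jump part of `∫ q_i q_j dπ` matches the
terms `m^{(k+k')}` of `⟨H^{(i)}, H^{(j)}⟩` one by one, and the Gaussian part matches the single
term `k = k' = 1`, since `q_n(0) = α_{n,1}`. Exchanging the finite sums with the integrals needs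
`∫₀ᵗ ∫ |e|ⁿ F_s(de) ds < ∞` for `n ≥ 2`: on `|e| ≤ 1` the integrand is at most `e²`, on `|e| > 1`
it is at most `n!/𝔠ⁿ (e^{𝔠e} + e^{-𝔠e})`, and these are integrable by (NL1) and (NL2).
For `i ≠ j` the right-hand side vanishes by orthonormality of the `q_n`. -/

def smallJumpLIntegral (ν : Measure ℝ) : ENNReal :=
  ∫⁻ e, ENNReal.ofReal (min 1 (e ^ 2)) ∂ν

def expTailLIntegral (ν : Measure ℝ) (u : ℝ) : ENNReal :=
  ∫⁻ e in {e : ℝ | 1 < |e|}, ENNReal.ofReal (Real.exp (u * e)) ∂ν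

lemma measurableSet_one_lt_abs : MeasurableSet {e : ℝ | 1 < |e|} :=
  measurableSet_lt measurable_const measurable_id.abs

lemma abs_pow_le_factorial_div_mul_exp_add_exp {𝔠 : ℝ} (h𝔠 : 0 < 𝔠) (n : ℕ) (e : ℝ) :
    |e| ^ n ≤ n.factorial / 𝔠 ^ n * (Real.exp (𝔠 * e) + Real.exp (-𝔠 * e)) := by
  have hexp : (𝔠 * |e|) ^ n / n.factorial ≤ Real.exp (𝔠 * |e|) :=
    Real.pow_div_factorial_le_exp _ (by positivity) n
  have hsym : Real.exp (𝔠 * |e|) ≤ Real.exp (𝔠 * e) + Real.exp (-𝔠 * e) := by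
    rcases abs_choice e with he | he <;> rw [he]
    · linarith [Real.exp_pos (-𝔠 * e)]
    · rw [mul_neg, ← neg_mul]; linarith [Real.exp_pos (𝔠 * e)]
  rw [mul_pow, div_le_iff₀ (by positivity)] at hexp
  rw [div_mul_eq_mul_div, le_div_iff₀ (by positivity)]
  nlinarith [Real.exp_pos (𝔠 * |e|)]

lemma lintegral_abs_pow_le {𝔠 : ℝ} (h𝔠 : 0 < 𝔠) {n : ℕ} (hn : 2 ≤ n) (ν : Measure ℝ) :
    ∫⁻ e, ENNReal.ofReal (|e| ^ n) ∂ν ≤ smallJumpLIntegral ν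
      + ENNReal.ofReal (n.factorial / 𝔠 ^ n)
        * (expTailLIntegral ν 𝔠 + expTailLIntegral ν (-𝔠)) := by
  have hS := measurableSet_one_lt_abs
  have hsmall : ∫⁻ e in {e : ℝ | 1 < |e|}ᶜ, ENNReal.ofReal (|e| ^ n) ∂ν ≤ smallJumpLIntegral ν := by
    refine (setLIntegral_mono' hS.compl fun e he => ?_).trans (setLIntegral_le_lintegral _ _)
    have he : |e| ≤ 1 := not_lt.mp he
    refine ENNReal.ofReal_le_ofReal ?_
    rw [min_eq_right (by nlinarith [abs_nonneg e, sq_abs e]), ← sq_abs]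
    exact pow_le_pow_of_le_one (abs_nonneg e) he hn
  have hlarge : ∫⁻ e in {e : ℝ | 1 < |e|}, ENNReal.ofReal (|e| ^ n) ∂ν
      ≤ ENNReal.ofReal (n.factorial / 𝔠 ^ n)
        * (expTailLIntegral ν 𝔠 + expTailLIntegral ν (-𝔠)) := by
    have hexp : ∀ u : ℝ, Measurable fun e : ℝ => ENNReal.ofReal (Real.exp (u * e)) :=
      fun u => (Real.measurable_exp.comp (measurable_id.const_mul u)).ennreal_ofReal
    rw [expTailLIntegral, expTailLIntegral, ← lintegral_add_left (hexp 𝔠),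
      ← lintegral_const_mul' _ _ ENNReal.ofReal_ne_top]
    refine lintegral_mono fun e => ?_
    rw [← ENNReal.ofReal_add (Real.exp_nonneg _) (Real.exp_nonneg _),
      ← ENNReal.ofReal_mul (by positivity)]
    exact ENNReal.ofReal_le_ofReal (abs_pow_le_factorial_div_mul_exp_add_exp h𝔠 n e)
  rw [← lintegral_add_compl _ hS, add_comm]
  exact add_le_add hsmall hlarge

lemma lintegral_abs_pow_lt_top {𝔠 : ℝ} (h𝔠 : 0 < 𝔠) {n : ℕ} (hn : 2 ≤ n) {ν : Measure ℝ}
    (hA : smallJumpLIntegral ν ≠ ⊤) (hB : expTailLIntegral ν 𝔠 ≠ ⊤)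
    (hB' : expTailLIntegral ν (-𝔠) ≠ ⊤) :
    ∫⁻ e, ENNReal.ofReal (|e| ^ n) ∂ν < ⊤ :=
  (lintegral_abs_pow_le h𝔠 hn ν).trans_lt <| ENNReal.add_lt_top.mpr ⟨hA.lt_top,
    ENNReal.mul_lt_top ENNReal.ofReal_lt_top (ENNReal.add_lt_top.mpr ⟨hB.lt_top, hB'.lt_top⟩)⟩

lemma enorm_pow_eq_ofReal_abs_pow (n : ℕ) (e : ℝ) : ‖e ^ n‖ₑ = ENNReal.ofReal (|e| ^ n) := by
  rw [Real.enorm_eq_ofReal_abs, abs_pow]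

lemma integrable_pow_of_expTail {𝔠 : ℝ} (h𝔠 : 0 < 𝔠) {n : ℕ} (hn : 2 ≤ n) {ν : Measure ℝ}
    (hA : smallJumpLIntegral ν ≠ ⊤) (hB : expTailLIntegral ν 𝔠 ≠ ⊤)
    (hB' : expTailLIntegral ν (-𝔠) ≠ ⊤) :
    Integrable (fun e : ℝ => e ^ n) ν := by
  refine ⟨(measurable_id.pow_const n).aestronglyMeasurable, ?_⟩
  simpa only [HasFiniteIntegral, enorm_pow_eq_ofReal_abs_pow]
    using lintegral_abs_pow_lt_top h𝔠 hn hA hB hB'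

lemma measurable_lintegral_of_measurable_coe {F : ℝ → Measure ℝ}
    (hF : ∀ A : Set ℝ, MeasurableSet A → Measurable fun s => F s A)
    {g : ℝ → ENNReal} (hg : Measurable g) :
    Measurable fun s => ∫⁻ e, g e ∂(F s) :=
  (Measure.measurable_lintegral hg).comp (Measure.measurable_of_measurable_coe F hF)

lemma aestronglyMeasurable_integral_of_ae_integrable {F : ℝ → Measure ℝ}
    (hF : ∀ A : Set ℝ, MeasurableSet A → Measurable fun s => F s A)
    {μ : Measure ℝ} {f : ℝ → ℝ} (hf : Measurable f) (hint : ∀ᵐ s ∂μ, Integrable f (F s)) :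
    AEStronglyMeasurable (fun s => ∫ e, f e ∂(F s)) μ := by
  have hmeas : Measurable fun s =>
      (∫⁻ e, ENNReal.ofReal (f e) ∂(F s)).toReal - (∫⁻ e, ENNReal.ofReal (-f e) ∂(F s)).toReal :=
    (measurable_lintegral_of_measurable_coe hF hf.ennreal_ofReal).ennreal_toReal.sub
      (measurable_lintegral_of_measurable_coe hF hf.neg.ennreal_ofReal).ennreal_toReal
  refine hmeas.aestronglyMeasurable.congr ?_
  filter_upwards [hint] with s hs
  exact (integral_eq_lintegral_pos_part_sub_lintegral_neg_part hs).symm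

section LevyFamily

variable {F : ℝ → Measure ℝ} {μ : Measure ℝ} {𝔠 : ℝ}

lemma measurable_smallJumpLIntegral
    (hF : ∀ A : Set ℝ, MeasurableSet A → Measurable fun s => F s A) :
    Measurable fun s => smallJumpLIntegral (F s) :=
  measurable_lintegral_of_measurable_coe hF
    (measurable_const.min (measurable_id.pow_const 2)).ennreal_ofReal

lemma measurable_expTailLIntegral
    (hF : ∀ A : Set ℝ, MeasurableSet A → Measurable fun s => F s A) (u : ℝ) :
    Measurable fun s => expTailLIntegral (F s) u := by
  simp_rw [expTailLIntegral, ← lintegral_indicator measurableSet_one_lt_abs]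
  exact measurable_lintegral_of_measurable_coe hF
    ((Real.measurable_exp.comp (measurable_id.const_mul u)).ennreal_ofReal.indicator
      measurableSet_one_lt_abs)

lemma ae_integrable_pow (h𝔠 : 0 < 𝔠) {n : ℕ} (hn : 2 ≤ n)
    (hF : ∀ A : Set ℝ, MeasurableSet A → Measurable fun s => F s A)
    (hA : ∫⁻ s, smallJumpLIntegral (F s) ∂μ ≠ ⊤) (hB : ∫⁻ s, expTailLIntegral (F s) 𝔠 ∂μ ≠ ⊤)
    (hB' : ∫⁻ s, expTailLIntegral (F s) (-𝔠) ∂μ ≠ ⊤) :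
    ∀ᵐ s ∂μ, Integrable (fun e : ℝ => e ^ n) (F s) := by
  filter_upwards [ae_lt_top (measurable_smallJumpLIntegral hF) hA,
    ae_lt_top (measurable_expTailLIntegral hF 𝔠) hB,
    ae_lt_top (measurable_expTailLIntegral hF (-𝔠)) hB'] with s hAs hBs hB's
  exact integrable_pow_of_expTail h𝔠 hn hAs.ne hBs.ne hB's.ne

lemma integrable_integral_pow (h𝔠 : 0 < 𝔠) {n : ℕ} (hn : 2 ≤ n)
    (hF : ∀ A : Set ℝ, MeasurableSet A → Measurable fun s => F s A)
    (hA : ∫⁻ s, smallJumpLIntegral (F s) ∂μ ≠ ⊤) (hB : ∫⁻ s, expTailLIntegral (F s) 𝔠 ∂μ ≠ ⊤)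
    (hB' : ∫⁻ s, expTailLIntegral (F s) (-𝔠) ∂μ ≠ ⊤) :
    Integrable (fun s => ∫ e, e ^ n ∂(F s)) μ := by
  refine ⟨aestronglyMeasurable_integral_of_ae_integrable hF (measurable_id.pow_const n)
    (ae_integrable_pow h𝔠 hn hF hA hB hB'), ?_⟩
  have hbound : ∀ s, ‖∫ e, e ^ n ∂(F s)‖ₑ ≤ smallJumpLIntegral (F s)
      + ENNReal.ofReal (n.factorial / 𝔠 ^ n)
        * (expTailLIntegral (F s) 𝔠 + expTailLIntegral (F s) (-𝔠)) := fun s => by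
    refine (enorm_integral_le_lintegral_enorm _).trans ?_
    simpa only [enorm_pow_eq_ofReal_abs_pow] using lintegral_abs_pow_le h𝔠 hn (F s)
  refine (lintegral_mono hbound).trans_lt ?_
  rw [lintegral_add_left (measurable_smallJumpLIntegral hF),
    lintegral_const_mul' _ _ ENNReal.ofReal_ne_top,
    lintegral_add_left (measurable_expTailLIntegral hF 𝔠)]
  exact ENNReal.add_lt_top.mpr ⟨hA.lt_top, ENNReal.mul_lt_top ENNReal.ofReal_lt_top
    (ENNReal.add_lt_top.mpr ⟨hB.lt_top, hB'.lt_top⟩)⟩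

end LevyFamily

lemma integral_sum_sum_const_mul {α ι κ : Type*} [MeasurableSpace α] {μ : Measure α}
    (s : Finset ι) (s' : Finset κ) (c : ι → κ → ℝ) (f : ι → κ → α → ℝ)
    (hf : ∀ k ∈ s, ∀ k' ∈ s', Integrable (f k k') μ) :
    ∫ x, ∑ k ∈ s, ∑ k' ∈ s', c k k' * f k k' x ∂μ
      = ∑ k ∈ s, ∑ k' ∈ s', c k k' * ∫ x, f k k' x ∂μ := by
  rw [integral_finsetSum _ fun k hk => integrable_finsetSum _ fun k' hk' =>
    (hf k hk k' hk').const_mul _]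
  refine Finset.sum_congr rfl fun k hk => ?_
  rw [integral_finsetSum _ fun k' hk' => (hf k hk k' hk').const_mul _]
  exact Finset.sum_congr rfl fun k' _ => integral_const_mul _ _

lemma qPoly_zero (α : ℕ → ℕ → ℝ) {n : ℕ} (hn : 1 ≤ n) : qPoly α n 0 = α n 1 := by
  rw [qPoly, Finset.sum_eq_single_of_mem 1 (Finset.mem_Icc.mpr ⟨le_rfl, hn⟩)]
  · simp
  · intro k hk hk1
    rw [zero_pow (by grind), mul_zero]

lemma qPoly_mul_qPoly_mul_sq (α : ℕ → ℕ → ℝ) (i j : ℕ) (e : ℝ) :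
    qPoly α i e * qPoly α j e * e ^ 2
      = ∑ k ∈ Finset.Icc 1 i, ∑ k' ∈ Finset.Icc 1 j, α i k * α j k' * e ^ (k + k') := by
  rw [qPoly, qPoly, Finset.sum_mul_sum, Finset.sum_mul]
  refine Finset.sum_congr rfl fun k hk => ?_
  rw [Finset.sum_mul]
  refine Finset.sum_congr rfl fun k' hk' => ?_
  have hexp : k + k' = (k - 1) + (k' - 1) + 2 := by grind
  rw [hexp, pow_add, pow_add]
  ring

lemma sum_sum_mul_ite_one (α : ℕ → ℕ → ℝ) {i j : ℕ} (hi : 1 ≤ i) (hj : 1 ≤ j) (C : ℝ) :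
    ∑ k ∈ Finset.Icc 1 i, ∑ k' ∈ Finset.Icc 1 j,
        α i k * α j k' * (if k = 1 ∧ k' = 1 then C else 0) = C * α i 1 * α j 1 := by
  have h1i : 1 ∈ Finset.Icc 1 i := Finset.mem_Icc.mpr ⟨le_rfl, hi⟩
  have h1j : 1 ∈ Finset.Icc 1 j := Finset.mem_Icc.mpr ⟨le_rfl, hj⟩
  rw [Finset.sum_eq_single_of_mem 1 h1i fun k _ hk => Finset.sum_eq_zero fun k' _ => by simp [hk],
    Finset.sum_eq_single_of_mem 1 h1j fun k' _ hk' => by simp [hk'], if_pos ⟨rfl, rfl⟩]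
  ring

lemma orthoBracket_eq_piIntegral (X : NHLevy Ω P T) (P' : Measure Ω) (α : ℕ → ℕ → ℝ)
    {i j : ℕ} (hi : 1 ≤ i) (hj : 1 ≤ j) {t : ℝ}
    (hF : ∀ n, 2 ≤ n → ∀ᵐ s ∂(volume.restrict (Set.Ioc 0 t)),
      Integrable (fun e : ℝ => e ^ n) (X.F s))
    (hm : ∀ n, 2 ≤ n →
      Integrable (fun s => ∫ e, e ^ n ∂(X.F s)) (volume.restrict (Set.Ioc 0 t))) :
    orthoBracket X P' α i j t = piIntegral X α i j t := by
  have hexp : ∀ k ∈ Finset.Icc 1 i, ∀ k' ∈ Finset.Icc 1 j, 2 ≤ k + k' := fun k hk k' hk' => by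
    grind
  have hF' : ∀ᵐ s ∂(volume.restrict (Set.Ioc 0 t)),
      ∀ n, 2 ≤ n → Integrable (fun e : ℝ => e ^ n) (X.F s) := by
    refine ae_all_iff.2 fun n => ?_
    by_cases hn : 2 ≤ n
    · filter_upwards [hF n hn] with s hs _ using hs
    · exact .of_forall fun _ h => absurd h hn
  have hjumps : ∑ k ∈ Finset.Icc 1 i, ∑ k' ∈ Finset.Icc 1 j,
      α i k * α j k' * powerJumpMean X P' (k + k') t
        = ∫ s in Set.Ioc 0 t, ∫ e, qPoly α i e * qPoly α j e * e ^ 2 ∂(X.F s) := calc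
    _ = ∑ k ∈ Finset.Icc 1 i, ∑ k' ∈ Finset.Icc 1 j,
          α i k * α j k' * ∫ s in Set.Ioc 0 t, ∫ e, e ^ (k + k') ∂(X.F s) := by
      refine Finset.sum_congr rfl fun k hk => Finset.sum_congr rfl fun k' hk' => ?_
      rw [powerJumpMean, if_neg (by grind)]
    _ = ∫ s in Set.Ioc 0 t, ∑ k ∈ Finset.Icc 1 i, ∑ k' ∈ Finset.Icc 1 j,
          α i k * α j k' * ∫ e, e ^ (k + k') ∂(X.F s) :=
      (integral_sum_sum_const_mul _ _ _ _ fun k hk k' hk' => hm _ (hexp k hk k' hk')).symm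
    _ = _ := by
      refine integral_congr_ae ?_
      filter_upwards [hF'] with s hs
      simp_rw [qPoly_mul_qPoly_mul_sq]
      exact (integral_sum_sum_const_mul _ _ _ _ fun k hk k' hk' => hs _ (hexp k hk k' hk')).symm
  simp_rw [orthoBracket, piIntegral, teugelsBracket, mul_add, Finset.sum_add_distrib]
  rw [sum_sum_mul_ite_one α hi hj, qPoly_zero α hi, qPoly_zero α hj, hjumps]

namespace NL1

lemma setLIntegral_smallJumpLIntegral_ne_top {X : NHLevy Ω P T} (hX : NL1 X) {t : ℝ}
    (ht : t ≤ T) : ∫⁻ s in Set.Ioc 0 t, smallJumpLIntegral (X.F s) ≠ ⊤ :=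
  ne_top_of_le_ne_top hX.ne <|
    (lintegral_mono_set (Set.Ioc_subset_Ioc le_rfl ht)).trans (lintegral_mono fun _ => le_add_self)

end NL1

namespace NL2

lemma setLIntegral_expTailLIntegral_ne_top {X : NHLevy Ω P T} {ε 𝔠 : ℝ} (hX : NL2 X ε 𝔠)
    (hε : 0 ≤ ε) {u : ℝ} (hu : |u| ≤ 𝔠) {t : ℝ} (ht : t ≤ T) :
    ∫⁻ s in Set.Ioc 0 t, expTailLIntegral (X.F s) u ≠ ⊤ := by
  obtain ⟨hu₁, hu₂⟩ := abs_le.mp hu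
  exact ne_top_of_le_ne_top (hX u ⟨by nlinarith, by nlinarith⟩).ne
    (lintegral_mono_set (Set.Ioc_subset_Ioc le_rfl ht))

end NL2

theorem stmt3_strong_orthogonality_general
    (P : Measure Ω)
    (T : ℝ) (X : NHLevy Ω P T) (hNL1 : NL1 X)
    (ε 𝔠 : ℝ) (hε : 0 < ε) (h𝔠 : 0 < 𝔠) (hNL2 : NL2 X ε 𝔠)
    (α : ℕ → ℕ → ℝ)
    -- the polynomials q_n are orthonormal in L²(π):
    (horth : ∀ n m : ℕ, 1 ≤ n → 1 ≤ m → n ≠ m → ∀ t ∈ Set.Icc (0 : ℝ) T,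
      piIntegral X α n m t = 0) :
    ∀ i j : ℕ, 1 ≤ i → 1 ≤ j → ∀ t ∈ Set.Icc (0 : ℝ) T,
      orthoBracket X P α i j t = piIntegral X α i j t ∧
      (i ≠ j → orthoBracket X P α i j t = 0) := by
  intro i j hi hj t ht
  have hA := hNL1.setLIntegral_smallJumpLIntegral_ne_top ht.2
  have hB : ∀ u, |u| ≤ 𝔠 → ∫⁻ s in Set.Ioc 0 t, expTailLIntegral (X.F s) u ≠ ⊤ :=
    fun u hu => hNL2.setLIntegral_expTailLIntegral_ne_top hε.le hu ht.2
  have hBpos := hB 𝔠 (abs_of_pos h𝔠).le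
  have hBneg := hB (-𝔠) (by rw [abs_neg, abs_of_pos h𝔠])
  have hbracket : orthoBracket X P α i j t = piIntegral X α i j t :=
    orthoBracket_eq_piIntegral X P α hi hj
      (fun _ hn => ae_integrable_pow h𝔠 hn X.F_meas hA hBpos hBneg)
      (fun _ hn => integrable_integral_pow h𝔠 hn X.F_meas hA hBpos hBneg)
  exact ⟨hbracket, fun hij => hbracket.trans (horth i j hi hj hij t ht)⟩

/-- Strong orthogonality of the orthonormalized power-jump processes:
`⟨H^{(i)}, H^{(j)}⟩_t = ∫₀ᵗ∫ q_i q_j dπ`, which vanishes for `i ≠ j`. -/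
theorem stmt3_strong_orthogonality
    (P : Measure Ω) [IsProbabilityMeasure P]
    (T : ℝ) (hT : 0 < T) (X : NHLevy Ω P T) (hNL1 : NL1 X)
    (ε 𝔠 : ℝ) (hε : 0 < ε) (h𝔠 : 0 < 𝔠) (hNL2 : NL2 X ε 𝔠)
    (α : ℕ → ℕ → ℝ)
    -- the polynomials q_n are orthonormal in L²(π):
    (horth : ∀ n m : ℕ, 1 ≤ n → 1 ≤ m → n ≠ m → ∀ t ∈ Set.Icc (0 : ℝ) T,
      piIntegral X α n m t = 0) :
    ∀ i j : ℕ, 1 ≤ i → 1 ≤ j → ∀ t ∈ Set.Icc (0 : ℝ) T,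
      orthoBracket X P α i j t = piIntegral X α i j t ∧
      (i ≠ j → orthoBracket X P α i j t = 0) :=
  stmt3_strong_orthogonality_general P T X hNL1 ε 𝔠 hε h𝔠 hNL2 α horth
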